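/- Let γ : [0,T] → ℝ² be a continuously differentiable loop (γ(0) = γ(T)), and let φ : ℝ² → [0,∞) be continuous, compactly supported, even (φ(−x) = φ(x) for all x), with ∫_{ℝ²} φ = 1. Then for every z ∈ ℝ², the integral (φ * n_γ)(z) = ∫_{ℝ²} φ(w) n_γ(z − w) dw converges absolutely and equals ∫₀^T ⟨(φ * θ)(γ(t) − z), γ̇(t)⟩ dt. -/

import Mathlib

open MeasureTheory Real Set

/-- The vector field `θ(z) = (−z₂, z₁)/(2π|z|²)` on `ℝ² ≃ ℂ`. -/
noncomputable def theta (z : ℂ) : ℂ :=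
  ((2 * Real.pi * ‖z‖ ^ 2)⁻¹ : ℝ) • (Complex.I * z)

/-- The Euclidean inner product on `ℝ² ≃ ℂ`. -/
noncomputable def dot2 (a b : ℂ) : ℝ := a.re * b.re + a.im * b.im

/-- The winding number of the `C¹` loop `γ : [0,T] → ℝ²` around `z`:
`n_γ(z) = ∫₀^T ⟨θ(γ(t) − z), γ̇(t)⟩ dt`. -/
noncomputable def winding (T : ℝ) (γ : ℝ → ℂ) (z : ℂ) : ℝ :=
  ∫ t in (0:ℝ)..T, dot2 (theta (γ t - z)) (derivWithin γ (Set.Icc 0 T) t)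

lemma norm_theta (u : ℂ) : ‖theta u‖ = (2 * Real.pi)⁻¹ * ‖u‖⁻¹ := by
  rcases eq_or_ne u 0 with rfl | hu
  · simp [theta]
  · have h : ‖u‖ ≠ 0 := norm_ne_zero_iff.mpr hu
    have hpi : (0:ℝ) < Real.pi := Real.pi_pos
    rw [theta, norm_smul, norm_mul, Complex.norm_I, one_mul, Real.norm_eq_abs,
      abs_of_nonneg (by positivity)]
    rw [show ‖u‖ ^ 2 = ‖u‖ * ‖u‖ by ring]
    rw [mul_inv, mul_inv, mul_inv]
    field_simp

lemma norm_sq_eq (a : ℂ) : ‖a‖ ^ 2 = a.re ^ 2 + a.im ^ 2 := by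
  rw [Complex.sq_norm, Complex.normSq_apply]; ring

lemma abs_dot2_le (a b : ℂ) : |dot2 a b| ≤ ‖a‖ * ‖b‖ := by
  have ha := norm_sq_eq a
  have hb := norm_sq_eq b
  have h1 : (0:ℝ) ≤ ‖a‖ := norm_nonneg a
  have h2 : (0:ℝ) ≤ ‖b‖ := norm_nonneg b
  simp only [dot2]
  rw [abs_le]
  constructor <;>
    nlinarith [sq_nonneg (a.re * b.im - a.im * b.re), sq_nonneg (a.re * b.im + a.im * b.re),
      sq_nonneg (a.re*b.re + a.im*b.im + ‖a‖*‖b‖), sq_nonneg (a.re*b.re + a.im*b.im - ‖a‖*‖b‖),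
      mul_nonneg h1 h2]

lemma measurable_theta : Measurable theta := by
  refine Measurable.smul (f := fun z : ℂ => ((2 * Real.pi * ‖z‖ ^ 2)⁻¹ : ℝ)) (g := fun z : ℂ => Complex.I * z) ?_ ?_
  · exact ((continuous_const.mul ((continuous_norm).pow 2)).measurable).inv
  · exact (continuous_const.mul continuous_id).measurable

lemma dot2_smul (r : ℝ) (u b : ℂ) : dot2 (r • u) b = r * dot2 u b := by
  simp [dot2, Complex.real_smul, Complex.mul_re, Complex.mul_im]
  ring

lemma integrableOn_inv_norm_ball :
    IntegrableOn (fun u : ℂ => ‖u‖⁻¹) (Metric.ball 0 1) volume := by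
  have hmeas : Measurable fun u : ℂ => ‖u‖⁻¹ := measurable_norm.inv
  refine ⟨hmeas.aestronglyMeasurable, ?_⟩
  rw [HasFiniteIntegral]
  set g : ℂ → ENNReal := fun u =>
    ∑' n : ℕ, (Metric.ball (0:ℂ) (((2:ℝ)^n)⁻¹)).indicator (fun _ => (2:ENNReal)^(n+1)) u with hg
  have hpt : ∀ u ∈ Metric.ball (0:ℂ) 1, (‖(‖u‖⁻¹ : ℝ)‖₊ : ENNReal) ≤ g u := by
    intro u hu
    rcases eq_or_ne u 0 with rfl | hu0
    · simp
    · have h0 : (0:ℝ) < ‖u‖ := norm_pos_iff.mpr hu0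
      have h1 : ‖u‖ < 1 := by simpa using hu
      obtain ⟨m, hm1, hm2⟩ := exists_mem_Ico_zpow h0 (one_lt_two (α := ℝ))
      have hmneg : m + 1 ≤ 0 := by
        by_contra hc
        push_neg at hc
        have : (1:ℝ) ≤ (2:ℝ) ^ m := by
          calc (1:ℝ) = (2:ℝ) ^ (0:ℤ) := by norm_num
          _ ≤ (2:ℝ) ^ m := by
            apply zpow_le_zpow_right₀ one_le_two
            omega
        linarith
      set n : ℕ := (-(m+1)).toNat with hn
      have hnz : (n:ℤ) = -(m+1) := Int.toNat_of_nonneg (by omega)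
      have hr1 : (2:ℝ) ^ (m+1) = ((2:ℝ)^n)⁻¹ := by
        rw [← zpow_natCast, hnz, zpow_neg, inv_inv]
      have hr2 : (2:ℝ) ^ m = ((2:ℝ)^(n+1))⁻¹ := by
        rw [← zpow_natCast]
        push_cast [hnz]
        rw [show ((-(m+1))+(1:ℤ) : ℤ) = -m by ring, zpow_neg, inv_inv]
      have humem : u ∈ Metric.ball (0:ℂ) (((2:ℝ)^n)⁻¹) := by
        simp only [Metric.mem_ball, dist_zero_right]
        rw [← hr1]; exact hm2
      calc (‖(‖u‖⁻¹ : ℝ)‖₊ : ENNReal) = ENNReal.ofReal (‖u‖⁻¹) :=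
            Real.enorm_eq_ofReal (by positivity)
        _ ≤ (2:ENNReal)^(n+1) := by
            rw [show ((2:ENNReal))^(n+1) = ENNReal.ofReal ((2:ℝ)^(n+1)) by
              simp [ENNReal.ofReal_pow]]
            apply ENNReal.ofReal_le_ofReal
            rw [← inv_inv ((2:ℝ)^(n+1)), ← hr2]
            exact inv_anti₀ (by positivity) hm1
        _ ≤ g u := by
            rw [hg]
            refine le_trans ?_ (ENNReal.le_tsum n)
            rw [Set.indicator_of_mem humem]
  calc ∫⁻ u in Metric.ball (0:ℂ) 1, (‖(‖u‖⁻¹ : ℝ)‖₊ : ENNReal) ∂volume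
      ≤ ∫⁻ u in Metric.ball (0:ℂ) 1, g u ∂volume := by
        apply setLIntegral_mono' measurableSet_ball hpt
    _ ≤ ∫⁻ u, g u ∂volume := setLIntegral_le_lintegral _ _
    _ = ∑' n : ℕ, ∫⁻ u, (Metric.ball (0:ℂ) (((2:ℝ)^n)⁻¹)).indicator
          (fun _ => (2:ENNReal)^(n+1)) u ∂volume := by
        apply lintegral_tsum
        intro n
        exact ((measurable_const.indicator measurableSet_ball).aemeasurable)
    _ = ∑' n : ℕ, (2:ENNReal)^(n+1) * volume (Metric.ball (0:ℂ) (((2:ℝ)^n)⁻¹)) := by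
        congr 1; funext n
        rw [lintegral_indicator measurableSet_ball, setLIntegral_const]
    _ = ∑' n : ℕ, (2:ENNReal)^(n+1) * ((2:ENNReal)^n)⁻¹ ^ 2 * NNReal.pi := by
        congr 1; funext n
        rw [Complex.volume_ball]
        rw [show ENNReal.ofReal (((2:ℝ)^n)⁻¹) = ((2:ENNReal)^n)⁻¹ by
          rw [ENNReal.ofReal_inv_of_pos (by positivity), ENNReal.ofReal_pow (by norm_num)]
          norm_num]
        ring
    _ = ∑' n : ℕ, ((2:ENNReal) * NNReal.pi) * ((2:ENNReal)⁻¹)^n := by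
        congr 1; funext n
        have h2 : (2:ENNReal) * 2⁻¹ = 1 := ENNReal.mul_inv_cancel (by norm_num) (by norm_num)
        calc (2:ENNReal)^(n+1) * ((2:ENNReal)^n)⁻¹ ^ 2 * NNReal.pi
            = (2:ENNReal) * ((2*2⁻¹:ENNReal))^n * (2⁻¹:ENNReal)^n * NNReal.pi := by
              rw [ENNReal.inv_pow, mul_pow]; ring
          _ = ((2:ENNReal) * NNReal.pi) * ((2:ENNReal)⁻¹)^n := by rw [h2, one_pow]; ring
    _ < ⊤ := by
        rw [ENNReal.tsum_mul_left, ENNReal.tsum_geometric]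
        apply ENNReal.mul_lt_top
        · exact ENNReal.mul_lt_top (by norm_num) (by simp [ENNReal.coe_lt_top])
        · rw [ENNReal.one_sub_inv_two]
          simp

lemma conv_kernel_bound (φ : ℂ → ℝ) (hcont : Continuous φ) (hsupp : HasCompactSupport φ)
    (hpos : ∀ x, 0 ≤ φ x) :
    ∃ C : ℝ, ∀ c : ℂ, Integrable (fun w => φ w * ‖theta (c + w)‖) volume ∧
      (∫ w : ℂ, φ w * ‖theta (c + w)‖) ≤ C := by
  obtain ⟨M0, hM0⟩ := hsupp.isCompact.exists_bound_of_continuousOn hcont.continuousOn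
  set M : ℝ := max M0 0 with hM
  have hMnn : 0 ≤ M := le_max_right _ _
  have hMb : ∀ w, φ w ≤ M := by
    intro w
    by_cases hw : w ∈ tsupport φ
    · exact le_trans (le_trans (le_abs_self _) (by simpa using hM0 w hw)) (le_max_left _ _)
    · rw [image_eq_zero_of_notMem_tsupport hw]; exact hMnn
  set k : ℂ → ℝ := (Metric.ball (0:ℂ) 1).indicator (fun u => ‖u‖⁻¹) with hkdef
  have hk : Integrable k volume :=
    (integrable_indicator_iff measurableSet_ball).mpr integrableOn_inv_norm_ball
  have hknn : ∀ u, 0 ≤ k u := by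
    intro u
    rw [hkdef]
    exact Set.indicator_nonneg (fun u _ => by positivity) u
  have hφint : Integrable φ volume := hcont.integrable_of_hasCompactSupport hsupp
  have hφm : Measurable φ := hcont.measurable
  set c2 : ℝ := (2 * Real.pi)⁻¹ with hc2
  have hc2nn : 0 ≤ c2 := by rw [hc2]; positivity
  refine ⟨c2 * (M * (∫ u, k u) + ∫ u, φ u), fun c => ?_⟩
  set B : ℂ → ℝ := fun w => c2 * (M * k (c + w) + φ w) with hB
  have hBint : Integrable B volume := (((hk.comp_add_left c).const_mul M).add hφint).const_mul c2
  have hle : ∀ w, φ w * ‖theta (c + w)‖ ≤ B w := by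
    intro w
    rw [norm_theta, hB]
    simp only []
    show _ ≤ c2 * (M * k (c + w) + φ w)
    by_cases hball : c + w ∈ Metric.ball (0:ℂ) 1
    · have hkval : k (c + w) = ‖c + w‖⁻¹ := by rw [hkdef, Set.indicator_of_mem hball]
      rw [hkval]
      have : φ w * ‖c + w‖⁻¹ ≤ M * ‖c + w‖⁻¹ :=
        mul_le_mul_of_nonneg_right (hMb w) (by positivity)
      nlinarith [hpos w, mul_le_mul_of_nonneg_left this hc2nn]
    · have hkval : k (c + w) = 0 := by rw [hkdef, Set.indicator_of_notMem hball]
      have h1 : (1:ℝ) ≤ ‖c + w‖ := by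
        simp only [Metric.mem_ball, dist_zero_right, not_lt] at hball
        exact hball
      have hinv : ‖c + w‖⁻¹ ≤ 1 := inv_le_one_of_one_le₀ h1
      have : φ w * ‖c + w‖⁻¹ ≤ φ w * 1 := mul_le_mul_of_nonneg_left hinv (hpos w)
      rw [hkval]
      nlinarith [mul_le_mul_of_nonneg_left this hc2nn]
  have hmeas : AEStronglyMeasurable (fun w => φ w * ‖theta (c + w)‖) volume :=
    (hφm.mul ((measurable_theta.comp (measurable_const.add measurable_id)).norm)
      ).aestronglyMeasurable
  have hint : Integrable (fun w => φ w * ‖theta (c + w)‖) volume := by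
    refine hBint.mono hmeas (Filter.Eventually.of_forall fun w => ?_)
    have h0 : 0 ≤ φ w * ‖theta (c + w)‖ := mul_nonneg (hpos w) (norm_nonneg _)
    rw [Real.norm_eq_abs, Real.norm_eq_abs, abs_of_nonneg h0,
      abs_of_nonneg (le_trans h0 (hle w))]
    exact hle w
  refine ⟨hint, ?_⟩
  calc (∫ w, φ w * ‖theta (c + w)‖) ≤ ∫ w, B w :=
        integral_mono hint hBint hle
    _ = c2 * (M * (∫ u, k u) + ∫ u, φ u) := by
        rw [hB]
        rw [integral_const_mul]
        congr 1
        rw [integral_add ((hk.comp_add_left c).const_mul M) hφint, integral_const_mul,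
          integral_add_left_eq_self k c]

noncomputable def dotCLM (b : ℂ) : ℂ →L[ℝ] ℝ :=
  Complex.reCLM.comp (((ContinuousLinearMap.mul ℂ ℂ).flip ((starRingEnd ℂ) b)).restrictScalars ℝ)

lemma dotCLM_apply (b a : ℂ) : dotCLM b a = dot2 a b := by
  simp [dotCLM, dot2, Complex.mul_re]
  ring

theorem stmt11 (T : ℝ) (hT : 0 < T) (γ : ℝ → ℂ)
    (hγ : ContDiffOn ℝ 1 γ (Set.Icc 0 T)) (hloop : γ 0 = γ T)
    (φ : ℂ → ℝ) (hcont : Continuous φ) (hsupp : HasCompactSupport φ)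
    (hpos : ∀ x, 0 ≤ φ x) (heven : ∀ x : ℂ, φ (-x) = φ x) (hint : (∫ x : ℂ, φ x) = 1)
    (z : ℂ) :
    Integrable (fun w : ℂ => φ w * winding T γ (z - w)) volume ∧
    (∫ w : ℂ, φ w * winding T γ (z - w)) =
      ∫ t in (0:ℝ)..T,
        dot2 (∫ w : ℂ, φ w • theta (γ t - z - w)) (derivWithin γ (Set.Icc 0 T) t) := by
  have hθm := measurable_theta
  have hφm : Measurable φ := hcont.measurable
  obtain ⟨C, hC⟩ := conv_kernel_bound φ hcont hsupp hpos
  have hIu : UniqueDiffOn ℝ (Set.Icc (0:ℝ) T) := uniqueDiffOn_Icc hT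
  set I : Set ℝ := Set.Icc 0 T with hI
  set g0 : ℝ → ℂ := derivWithin γ I with hg0
  have hg0t : ∀ t, derivWithin γ (Set.Icc 0 T) t = g0 t := fun _ => rfl
  have hg0c : ContinuousOn g0 I := hγ.continuousOn_derivWithin hIu le_rfl
  set cl : ℝ → ℝ := fun t => max 0 (min t T) with hcl
  have hclc : Continuous cl := continuous_const.max (continuous_id.min continuous_const)
  have hclmem : ∀ t, cl t ∈ I :=
    fun t => ⟨le_max_left _ _, max_le hT.le (min_le_right _ _)⟩
  have hcleq : ∀ t ∈ I, cl t = t := by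
    intro t ht
    rw [hcl]
    simp only
    rw [min_eq_left ht.2, max_eq_right ht.1]
  set γ' : ℝ → ℂ := fun t => γ (cl t) with hγ'
  have hγ'c : Continuous γ' := hγ.continuousOn.comp_continuous hclc hclmem
  set g' : ℝ → ℂ := fun t => g0 (cl t) with hg'
  have hg'c : Continuous g' := hg0c.comp_continuous hclc hclmem
  have hγ'eq : ∀ t ∈ I, γ' t = γ t := fun t ht => by rw [hγ']; simp only; rw [hcleq t ht]
  have hg'eq : ∀ t ∈ I, g' t = g0 t := fun t ht => by rw [hg']; simp only; rw [hcleq t ht]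
  obtain ⟨M0, hM0⟩ := (isCompact_Icc (a := (0:ℝ)) (b := T)).exists_bound_of_continuousOn hg0c
  set M := max M0 0 with hMdef
  have hM : ∀ t, ‖g' t‖ ≤ M := fun t => le_trans (hM0 _ (hclmem t)) (le_max_left _ _)
  have hMnn : (0:ℝ) ≤ M := le_max_right _ _
  set μT := volume.restrict (Set.Ioc (0:ℝ) T) with hμT
  set F : ℝ × ℂ → ℝ := fun p => φ p.2 * dot2 (theta (γ' p.1 - z + p.2)) (g' p.1) with hF
  have hFval : ∀ t w, F (t, w) = φ w * dot2 (theta (γ' t - z + w)) (g' t) := fun t w => rfl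
  -- measurability
  have h1 : Measurable fun p : ℝ × ℂ => theta (γ' p.1 - z + p.2) :=
    hθm.comp (((hγ'c.comp continuous_fst).sub continuous_const).add continuous_snd).measurable
  have hFmeas : Measurable F := by
    apply Measurable.mul (hφm.comp measurable_snd)
    apply Measurable.add
    · exact (Complex.measurable_re.comp h1).mul
        ((Complex.continuous_re.comp (hg'c.comp continuous_fst)).measurable)
    · exact (Complex.measurable_im.comp h1).mul
        ((Complex.continuous_im.comp (hg'c.comp continuous_fst)).measurable)
  have hfibmeas : ∀ t : ℝ, Measurable fun w => F (t, w) :=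
    fun t => hFmeas.comp (measurable_prodMk_left)
  -- pointwise bound
  have hbnd : ∀ t w, ‖F (t, w)‖ ≤ φ w * ‖theta (γ' t - z + w)‖ * M := by
    intro t w
    rw [hFval, Real.norm_eq_abs, abs_mul, abs_of_nonneg (hpos w)]
    calc φ w * |dot2 (theta (γ' t - z + w)) (g' t)|
        ≤ φ w * (‖theta (γ' t - z + w)‖ * ‖g' t‖) :=
          mul_le_mul_of_nonneg_left (abs_dot2_le _ _) (hpos w)
      _ ≤ φ w * ‖theta (γ' t - z + w)‖ * M := by
          rw [mul_assoc]
          refine mul_le_mul_of_nonneg_left ?_ (hpos w)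
          exact mul_le_mul_of_nonneg_left (hM t) (norm_nonneg _)
  have hfib : ∀ t : ℝ, Integrable (fun w => F (t, w)) volume := by
    intro t
    refine ((hC (γ' t - z)).1.mul_const M).mono' (hfibmeas t).aestronglyMeasurable
      (Filter.Eventually.of_forall fun w => hbnd t w)
  have hfib2 : ∀ t, (∫ w, ‖F (t, w)‖) ≤ C * M := by
    intro t
    calc (∫ w, ‖F (t, w)‖) ≤ ∫ w, φ w * ‖theta (γ' t - z + w)‖ * M :=
          integral_mono (hfib t).norm ((hC (γ' t - z)).1.mul_const M) (hbnd t)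
      _ = (∫ w, φ w * ‖theta (γ' t - z + w)‖) * M := integral_mul_const M _
      _ ≤ C * M := mul_le_mul_of_nonneg_right (hC (γ' t - z)).2 hMnn
  have hFprod : Integrable F (μT.prod volume) := by
    rw [integrable_prod_iff hFmeas.aestronglyMeasurable]
    refine ⟨Filter.Eventually.of_forall fun t => hfib t, ?_⟩
    have hm : AEStronglyMeasurable (fun t => ∫ w, ‖F (t, w)‖ ∂volume) μT :=
      (hFmeas.norm.aestronglyMeasurable (μ := μT.prod volume)).integral_prod_right'
    have hconst : Integrable (fun _ : ℝ => C * M) μT :=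
      integrableOn_const measure_Ioc_lt_top.ne
    refine hconst.mono' hm (Filter.Eventually.of_forall fun t => ?_)
    rw [Real.norm_eq_abs, abs_of_nonneg (integral_nonneg fun w => norm_nonneg _)]
    exact hfib2 t
  have hswap : (∫ t, ∫ w, F (t, w) ∂volume ∂μT) = ∫ w, ∫ t, F (t, w) ∂μT ∂volume :=
    integral_integral_swap hFprod
  -- key identity
  have key : ∀ w, φ w * winding T γ (z - w) = ∫ t, F (t, w) ∂μT := by
    intro w
    rw [winding, intervalIntegral.integral_of_le hT.le, ← integral_const_mul, hμT]
    refine setIntegral_congr_fun measurableSet_Ioc fun t ht => ?_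
    have htI : t ∈ I := ⟨le_of_lt ht.1, ht.2⟩
    show φ w * dot2 (theta (γ t - (z - w))) (derivWithin γ (Set.Icc 0 T) t) = F (t, w)
    rw [hFval, hγ'eq t htI, hg'eq t htI, hg0t, show γ t - (z - w) = γ t - z + w by ring]
  constructor
  · exact hFprod.integral_prod_right.congr
      (Filter.Eventually.of_forall fun w => (key w).symm)
  · rw [intervalIntegral.integral_of_le hT.le]
    calc (∫ w, φ w * winding T γ (z - w)) = ∫ w, ∫ t, F (t, w) ∂μT := by
          congr 1; funext w; exact key w
      _ = ∫ t, ∫ w, F (t, w) ∂volume ∂μT := hswap.symm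
      _ = ∫ t in Set.Ioc (0:ℝ) T,
            dot2 (∫ w : ℂ, φ w • theta (γ t - z - w)) (derivWithin γ (Set.Icc 0 T) t) := by
          rw [hμT]
          refine setIntegral_congr_fun measurableSet_Ioc fun t ht => ?_
          have htI : t ∈ I := ⟨le_of_lt ht.1, ht.2⟩
          show (∫ w, F (t, w)) =
            dot2 (∫ w : ℂ, φ w • theta (γ t - z - w)) (derivWithin γ (Set.Icc 0 T) t)
          rw [hg0t]
          have hsm : Integrable (fun w => φ w • theta (γ t - z + w)) volume := by
            refine (hC (γ t - z)).1.mono'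
              ((hφm.smul (hθm.comp (measurable_const.add measurable_id))).aestronglyMeasurable)
              (Filter.Eventually.of_forall fun w => ?_)
            rw [norm_smul, Real.norm_eq_abs, abs_of_nonneg (hpos w)]
          calc (∫ w, F (t, w)) = ∫ w, dotCLM (g0 t) (φ w • theta (γ t - z + w)) := by
                congr 1; funext w
                rw [hFval, hγ'eq t htI, hg'eq t htI, dotCLM_apply, dot2_smul]
            _ = dotCLM (g0 t) (∫ w, φ w • theta (γ t - z + w)) :=
                ContinuousLinearMap.integral_comp_comm _ hsm
            _ = dot2 (∫ w, φ w • theta (γ t - z + w)) (g0 t) := dotCLM_apply _ _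
            _ = dot2 (∫ w, φ w • theta (γ t - z - w)) (g0 t) := by
                congr 1
                have hneg := integral_neg_eq_self (fun w => φ w • theta (γ t - z - w)) volume
                rw [← hneg]
                congr 1; funext w
                rw [heven w, sub_neg_eq_add]
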